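/- arXiv:2507.12814 — 4 statements merged into one kernel-verified Lean document; each statement's English description precedes it below -/
import Mathlib

section
/- Let Φ, L, and Φ̃D_wΦ̃ᵀ be symmetric matrices in ℝ^{N_b×N_b} with L invertible and positive definite, λ > 0, and suppose α† solves (Φ + λL)α† = b and α solves (Φ̃D_wΦ̃ᵀ + λL)α = b̃, where Φ and Φ̃D_wΦ̃ᵀ are positive semidefinite. Then ‖α − α†‖₂ ≤ (‖L⁻¹‖₂/λ)(‖b − b̃‖₂ + ‖Φ̃D_wΦ̃ᵀ − Φ‖₂ ‖(Φ + λL)⁻¹‖₂ ‖b‖₂). -/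
open scoped Matrix.Norms.L2Operator MatrixOrder


open Matrix

variable {Nb : ℕ}

private lemma smul_posDef' {L : Matrix (Fin Nb) (Fin Nb) ℝ} (hL : L.PosDef) {lam : ℝ}
    (hlam : 0 < lam) : (lam • L).PosDef := by
  refine ⟨?_, fun x hx => ?_⟩
  · unfold Matrix.IsHermitian
    rw [conjTranspose_smul, hL.1.eq]; simp
  · exact (hL.smul hlam).2 hx

private lemma norm_sq_le' {L : Matrix (Fin Nb) (Fin Nb) ℝ} (hL : L.PosDef)
    (x : EuclideanSpace ℝ (Fin Nb)) :
    ‖x‖ ^ 2 ≤ ‖L⁻¹‖ * ((x : Fin Nb → ℝ) ⬝ᵥ L *ᵥ x) := by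
  set S := CFC.sqrt L with hSdef
  have hSS : S * S = L := CFC.sqrt_mul_sqrt_self L hL.posSemidef.nonneg
  have hSH : S.IsHermitian := (CFC.sqrt_nonneg L).posSemidef.1
  have hSd : IsUnit S.det := by
    have hLd : IsUnit L.det := hL.det_pos.ne'.isUnit
    rw [← hSS, det_mul] at hLd
    exact isUnit_of_mul_isUnit_left hLd
  have hx : x = (EuclideanSpace.equiv (Fin Nb) ℝ).symm
      (S⁻¹ *ᵥ (S *ᵥ (x : Fin Nb → ℝ))) := by
    rw [mulVec_mulVec, nonsing_inv_mul S hSd]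
    simp [EuclideanSpace.equiv]
  have h1 : ‖x‖ ≤ ‖S⁻¹‖ * ‖(EuclideanSpace.equiv (Fin Nb) ℝ).symm (S *ᵥ (x : Fin Nb → ℝ))‖ := by
    conv_lhs => rw [hx]
    exact l2_opNorm_mulVec S⁻¹ (WithLp.toLp 2 (S *ᵥ (x : Fin Nb → ℝ)))
  have h2 : ‖(EuclideanSpace.equiv (Fin Nb) ℝ).symm (S *ᵥ (x : Fin Nb → ℝ))‖ ^ 2
      = (x : Fin Nb → ℝ) ⬝ᵥ L *ᵥ x := by
    rw [← real_inner_self_eq_norm_sq]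
    rw [← hSS, ← mulVec_mulVec]
    simp only [EuclideanSpace.equiv, PiLp.inner_apply, RCLike.inner_apply, conj_trivial]
    have hST : Sᵀ = S := by
      conv_rhs => rw [← hSH.eq]
      ext i j; simp [conjTranspose_apply]
    rw [show ((x : Fin Nb → ℝ) ⬝ᵥ S *ᵥ (S *ᵥ x)) = (S *ᵥ (x : Fin Nb → ℝ)) ⬝ᵥ (S *ᵥ x) by
      rw [Matrix.dotProduct_mulVec, ← Matrix.mulVec_transpose, hST]]
    rfl
  have hSinvSq : ‖S⁻¹‖ ^ 2 = ‖L⁻¹‖ := by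
    have hinv : (S⁻¹)ᴴ = S⁻¹ := by rw [conjTranspose_nonsing_inv, hSH.eq]
    have hLinv : S⁻¹ * S⁻¹ = L⁻¹ := by rw [← hSS, Matrix.mul_inv_rev]
    have h3 := l2_opNorm_conjTranspose_mul_self (S⁻¹)
    rw [hinv, hLinv] at h3
    rw [pow_two, ← h3]
  calc ‖x‖ ^ 2 ≤ (‖S⁻¹‖ * ‖(EuclideanSpace.equiv (Fin Nb) ℝ).symm (S *ᵥ (x : Fin Nb → ℝ))‖) ^ 2 := by
        apply pow_le_pow_left₀ (norm_nonneg x) h1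
    _ = ‖L⁻¹‖ * ((x : Fin Nb → ℝ) ⬝ᵥ L *ᵥ x) := by
        rw [mul_pow, hSinvSq, h2]

private lemma inv_mulVec_norm_le' {L M : Matrix (Fin Nb) (Fin Nb) ℝ} (hL : L.PosDef)
    (hM : M.PosDef) {lam : ℝ} (hlam : 0 < lam)
    (hcomp : ∀ x : Fin Nb → ℝ, lam * (x ⬝ᵥ L *ᵥ x) ≤ x ⬝ᵥ M *ᵥ x)
    (y : EuclideanSpace ℝ (Fin Nb)) :
    ‖(EuclideanSpace.equiv (Fin Nb) ℝ).symm (M⁻¹ *ᵥ (y : Fin Nb → ℝ))‖ ≤ ‖L⁻¹‖ / lam * ‖y‖ := by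
  set x : EuclideanSpace ℝ (Fin Nb) :=
    (EuclideanSpace.equiv (Fin Nb) ℝ).symm (M⁻¹ *ᵥ (y : Fin Nb → ℝ)) with hxdef
  have hMx : M *ᵥ (x : Fin Nb → ℝ) = y := by
    show M *ᵥ (M⁻¹ *ᵥ (y : Fin Nb → ℝ)) = y
    rw [mulVec_mulVec, mul_nonsing_inv M hM.det_pos.ne'.isUnit, one_mulVec]
  have key : lam * ‖x‖ ^ 2 ≤ ‖L⁻¹‖ * (‖x‖ * ‖y‖) := by
    calc lam * ‖x‖ ^ 2 ≤ lam * (‖L⁻¹‖ * ((x : Fin Nb → ℝ) ⬝ᵥ L *ᵥ x)) := by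
          exact mul_le_mul_of_nonneg_left (norm_sq_le' hL x) hlam.le
      _ = ‖L⁻¹‖ * (lam * ((x : Fin Nb → ℝ) ⬝ᵥ L *ᵥ x)) := by ring
      _ ≤ ‖L⁻¹‖ * ((x : Fin Nb → ℝ) ⬝ᵥ M *ᵥ x) :=
          mul_le_mul_of_nonneg_left (hcomp x) (norm_nonneg _)
      _ = ‖L⁻¹‖ * ((x : Fin Nb → ℝ) ⬝ᵥ (y : Fin Nb → ℝ)) := by rw [hMx]
      _ ≤ ‖L⁻¹‖ * (‖x‖ * ‖y‖) := by
          refine mul_le_mul_of_nonneg_left ?_ (norm_nonneg _)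
          have := real_inner_le_norm x y
          simpa [PiLp.inner_apply, RCLike.inner_apply, conj_trivial, dotProduct,
            mul_comm] using this
  rcases eq_or_lt_of_le (norm_nonneg x) with h0 | h0
  · rw [← h0]
    positivity
  · rw [div_mul_eq_mul_div, le_div_iff₀ hlam, mul_comm _ lam]
    nlinarith [key]

/-- if `(Φ + λL)α† = b` and `(B + λL)α = b̃` with `B = Φ̃ D_w Φ̃ᵀ`, `L` symmetric
positive definite, `Φ, B` symmetric positive semidefinite and `λ > 0`, then
`‖α − α†‖₂ ≤ (‖L⁻¹‖₂/λ)(‖b − b̃‖₂ + ‖B − Φ‖₂ ‖(Φ + λL)⁻¹‖₂ ‖b‖₂)`.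
Vector norms are Euclidean and matrix norms are spectral (L2 operator) norms. -/
theorem coefficient_error_estimate
    {Nb : ℕ} (Φ L B : Matrix (Fin Nb) (Fin Nb) ℝ)
    (hΦ : Φ.PosSemidef) (hB : B.PosSemidef) (hL : L.PosDef)
    (lam : ℝ) (hlam : 0 < lam)
    (αd α : EuclideanSpace ℝ (Fin Nb)) (b bt : EuclideanSpace ℝ (Fin Nb))
    (hαd : (Φ + lam • L).mulVec αd = b)
    (hα : (B + lam • L).mulVec α = bt) :
    ‖α - αd‖ ≤ (‖L⁻¹‖ / lam) *
      (‖b - bt‖ + ‖B - Φ‖ * ‖(Φ + lam • L)⁻¹‖ * ‖b‖) := by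
  set M1 := Φ + lam • L with hM1def
  set M2 := B + lam • L with hM2def
  have hlamL : (lam • L).PosDef := smul_posDef' hL hlam
  have hM1 : M1.PosDef := Matrix.PosDef.posSemidef_add hΦ hlamL
  have hM2 : M2.PosDef := Matrix.PosDef.posSemidef_add hB hlamL
  have hcomp1 : ∀ x : Fin Nb → ℝ, lam * (x ⬝ᵥ L *ᵥ x) ≤ x ⬝ᵥ M1 *ᵥ x := by
    intro x
    have h := hΦ.dotProduct_mulVec_nonneg x
    rw [star_trivial] at h
    rw [hM1def, add_mulVec, dotProduct_add, smul_mulVec, dotProduct_smul, smul_eq_mul]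
    linarith
  have hcomp2 : ∀ x : Fin Nb → ℝ, lam * (x ⬝ᵥ L *ᵥ x) ≤ x ⬝ᵥ M2 *ᵥ x := by
    intro x
    have h := hB.dotProduct_mulVec_nonneg x
    rw [star_trivial] at h
    rw [hM2def, add_mulVec, dotProduct_add, smul_mulVec, dotProduct_smul, smul_eq_mul]
    linarith
  have hαd' : (αd : Fin Nb → ℝ) = M1⁻¹ *ᵥ (b : Fin Nb → ℝ) := by
    rw [← hαd, mulVec_mulVec, nonsing_inv_mul M1 hM1.det_pos.ne'.isUnit, one_mulVec]
  have hα' : (α : Fin Nb → ℝ) = M2⁻¹ *ᵥ (bt : Fin Nb → ℝ) := by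
    rw [← hα, mulVec_mulVec, nonsing_inv_mul M2 hM2.det_pos.ne'.isUnit, one_mulVec]
  -- the decomposition
  have hdiff : M2⁻¹ - M1⁻¹ = M2⁻¹ * (Φ - B) * M1⁻¹ := by
    have : M1 - M2 = Φ - B := by rw [hM1def, hM2def]; abel
    rw [← this, mul_sub, sub_mul, Matrix.mul_assoc,
      mul_nonsing_inv M1 hM1.det_pos.ne'.isUnit,
      nonsing_inv_mul M2 hM2.det_pos.ne'.isUnit, mul_one, one_mul]
  have hsplit : α - αd =
      (EuclideanSpace.equiv (Fin Nb) ℝ).symm (M2⁻¹ *ᵥ ((bt : Fin Nb → ℝ) - b))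
      + (EuclideanSpace.equiv (Fin Nb) ℝ).symm
          (M2⁻¹ *ᵥ ((Φ - B) *ᵥ (M1⁻¹ *ᵥ (b : Fin Nb → ℝ)))) := by
    have : (α : Fin Nb → ℝ) - αd = M2⁻¹ *ᵥ ((bt : Fin Nb → ℝ) - b)
        + M2⁻¹ *ᵥ ((Φ - B) *ᵥ (M1⁻¹ *ᵥ (b : Fin Nb → ℝ))) := by
      rw [hα', hαd', mulVec_sub]
      have h2 : M2⁻¹ *ᵥ ((Φ - B) *ᵥ (M1⁻¹ *ᵥ (b : Fin Nb → ℝ)))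
          = (M2⁻¹ - M1⁻¹) *ᵥ (b : Fin Nb → ℝ) := by
        rw [hdiff, mulVec_mulVec, mulVec_mulVec, Matrix.mul_assoc]
      rw [h2, sub_mulVec]
      abel
    ext i; simpa using congrFun this i
  rw [hsplit]
  have c1 := inv_mulVec_norm_le' hL hM2 hlam hcomp2 (bt - b)
  have c2 := inv_mulVec_norm_le' hL hM2 hlam hcomp2
    ((EuclideanSpace.equiv (Fin Nb) ℝ).symm ((Φ - B) *ᵥ (M1⁻¹ *ᵥ (b : Fin Nb → ℝ))))
  have c3 : ‖(EuclideanSpace.equiv (Fin Nb) ℝ).symm ((Φ - B) *ᵥ (M1⁻¹ *ᵥ (b : Fin Nb → ℝ)))‖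
      ≤ ‖B - Φ‖ * (‖M1⁻¹‖ * ‖b‖) := by
    calc ‖(EuclideanSpace.equiv (Fin Nb) ℝ).symm ((Φ - B) *ᵥ (M1⁻¹ *ᵥ (b : Fin Nb → ℝ)))‖
        ≤ ‖Φ - B‖ * ‖(EuclideanSpace.equiv (Fin Nb) ℝ).symm (M1⁻¹ *ᵥ (b : Fin Nb → ℝ))‖ :=
          l2_opNorm_mulVec (Φ - B) (WithLp.toLp 2 (M1⁻¹ *ᵥ (b : Fin Nb → ℝ)))
      _ ≤ ‖B - Φ‖ * (‖M1⁻¹‖ * ‖b‖) := by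
          rw [norm_sub_rev]
          exact mul_le_mul_of_nonneg_left (l2_opNorm_mulVec M1⁻¹ b) (norm_nonneg _)
  have hbt : ‖(bt - b : EuclideanSpace ℝ (Fin Nb))‖ = ‖b - bt‖ := norm_sub_rev _ _
  calc ‖_ + _‖ ≤ _ + _ := norm_add_le _ _
    _ ≤ ‖L⁻¹‖ / lam * ‖(bt - b : EuclideanSpace ℝ (Fin Nb))‖
        + ‖L⁻¹‖ / lam * ‖(EuclideanSpace.equiv (Fin Nb) ℝ).symm
            ((Φ - B) *ᵥ (M1⁻¹ *ᵥ (b : Fin Nb → ℝ)))‖ := add_le_add c1 c2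
    _ ≤ ‖L⁻¹‖ / lam * ‖b - bt‖ + ‖L⁻¹‖ / lam * (‖B - Φ‖ * (‖M1⁻¹‖ * ‖b‖)) := by
        rw [hbt]
        have hc : 0 ≤ ‖L⁻¹‖ / lam := div_nonneg (norm_nonneg _) hlam.le
        exact add_le_add le_rfl (mul_le_mul_of_nonneg_left c3 hc)
    _ = (‖L⁻¹‖ / lam) * (‖b - bt‖ + ‖B - Φ‖ * ‖M1⁻¹‖ * ‖b‖) := by ring
end

section
/- Let K: Ω × Ω → ℝ be a function, X = (x₁,…,x_{N_c}) points in Ω, K_η an invertible N_c×N_c matrix, and D_d: ℝ^{d_z} → ℝ^{N_c} an L_{D_d}-Lipschitz map. Define D(z)(x) = Σ_{i=1}^{N_c} (K_η⁻¹ D_d(z))ᵢ K(x, xᵢ). Let ⟨·,·⟩_U be an inner product on a function space containing all K(·, xᵢ), and let A be the Gram matrix Aᵢⱼ = ⟨K(·,xᵢ), K(·,xⱼ)⟩_U. Then D is Lipschitz from (ℝ^{d_z}, ‖·‖₂) to (‖·‖_U) with Lipschitz constant L_{D_d} √(‖K_η^{-T} A K_η⁻¹‖₂). -/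
open scoped Matrix.Norms.L2Operator

/-- decoder Lipschitz bound. `U` is an inner product space of real-valued
functions on `Ω` (via `FunLike`), `Kdot i` is the function `K(·, xᵢ) ∈ U`,
`K_η` is an invertible `N_c × N_c` matrix, `D_d` is `L_{D_d}`-Lipschitz, and
`D(z) = Σᵢ (K_η⁻¹ D_d(z))ᵢ K(·, xᵢ)`. With `A` the Gram matrix
`Aᵢⱼ = ⟨K(·,xᵢ), K(·,xⱼ)⟩_U`, the map `D` is Lipschitz with constant
`L_{D_d} √‖K_η⁻ᵀ A K_η⁻¹‖₂`. -/
theorem decoder_lipschitz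
    {Ω : Type*} {Nc dz : ℕ}
    {U : Type*} [NormedAddCommGroup U] [InnerProductSpace ℝ U]
    [FunLike U Ω ℝ]
    (K : Ω → Ω → ℝ) (X : Fin Nc → Ω)
    (Kdot : Fin Nc → U) (hKdot : ∀ i x, (Kdot i) x = K x (X i))
    (Kη : Matrix (Fin Nc) (Fin Nc) ℝ) (hKη : IsUnit Kη.det)
    (Dd : EuclideanSpace ℝ (Fin dz) → EuclideanSpace ℝ (Fin Nc))
    (LDd : ℝ) (hLDd : 0 ≤ LDd)
    (hlip : ∀ z₁ z₂, ‖Dd z₁ - Dd z₂‖ ≤ LDd * ‖z₁ - z₂‖)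
    (D : EuclideanSpace ℝ (Fin dz) → U)
    (hD : ∀ z, D z = ∑ i, (Kη⁻¹.mulVec (Dd z)) i • Kdot i)
    (A : Matrix (Fin Nc) (Fin Nc) ℝ)
    (hA : ∀ i j, A i j = (inner ℝ (Kdot i) (Kdot j) : ℝ)) :
    ∀ z₁ z₂, ‖D z₁ - D z₂‖ ≤
      LDd * Real.sqrt ‖Kη⁻¹.transpose * A * Kη⁻¹‖ * ‖z₁ - z₂‖ := by
  intro z₁ z₂
  set M : Matrix (Fin Nc) (Fin Nc) ℝ := Kη⁻¹.transpose * A * Kη⁻¹ with hM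
  set v : EuclideanSpace ℝ (Fin Nc) := Dd z₁ - Dd z₂ with hv
  set w : Fin Nc → ℝ := Kη⁻¹.mulVec v with hw
  have hsub : D z₁ - D z₂ = ∑ i, w i • Kdot i := by
    rw [hD, hD, ← Finset.sum_sub_distrib]
    refine Finset.sum_congr rfl fun i _ => ?_
    rw [← sub_smul]
    congr 1
    have : (v : Fin Nc → ℝ) = (Dd z₁ : Fin Nc → ℝ) - (Dd z₂ : Fin Nc → ℝ) := rfl
    rw [hw, this, Matrix.mulVec_sub]
    rfl
  set s : U := D z₁ - D z₂ with hs
  have h1 : ‖s‖ ^ 2 = dotProduct w (A.mulVec w) := by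
    rw [← real_inner_self_eq_norm_sq, hsub]
    rw [sum_inner]
    simp_rw [inner_sum, real_inner_smul_left, real_inner_smul_right, ← hA,
      dotProduct, Matrix.mulVec, dotProduct, Finset.mul_sum]
    exact Finset.sum_congr rfl fun i _ => Finset.sum_congr rfl fun j _ => by ring
  have h2 : dotProduct w (A.mulVec w) = dotProduct v (M.mulVec v) := by
    rw [hM, hw, Matrix.mul_assoc, ← Matrix.mulVec_mulVec,
      Matrix.dotProduct_mulVec v Kη⁻¹.transpose, Matrix.vecMul_transpose,
      ← Matrix.mulVec_mulVec]
  have h3 : dotProduct v (M.mulVec v) ≤ ‖M‖ * ‖v‖ ^ 2 := by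
    have hin : dotProduct v (M.mulVec v)
        = (inner ℝ v ((EuclideanSpace.equiv (Fin Nc) ℝ).symm (M.mulVec v)) : ℝ) := by
      simp [dotProduct, PiLp.inner_apply, RCLike.inner_apply, conj_trivial, mul_comm]
    rw [hin]
    calc (inner ℝ v ((EuclideanSpace.equiv (Fin Nc) ℝ).symm (M.mulVec v)) : ℝ)
        ≤ ‖v‖ * ‖(EuclideanSpace.equiv (Fin Nc) ℝ).symm (M.mulVec v)‖ :=
          real_inner_le_norm _ _
      _ ≤ ‖v‖ * (‖M‖ * ‖v‖) := by
          gcongr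
          exact Matrix.l2_opNorm_mulVec M v
      _ = ‖M‖ * ‖v‖ ^ 2 := by ring
  have hnorm : ‖s‖ ≤ Real.sqrt ‖M‖ * ‖v‖ := by
    have h4 : ‖s‖ ^ 2 ≤ (Real.sqrt ‖M‖ * ‖v‖) ^ 2 := by
      rw [mul_pow, Real.sq_sqrt (norm_nonneg M)]
      rw [h1, h2] at *
      linarith [h3]
    calc ‖s‖ = Real.sqrt (‖s‖ ^ 2) := (Real.sqrt_sq (norm_nonneg s)).symm
      _ ≤ Real.sqrt ((Real.sqrt ‖M‖ * ‖v‖) ^ 2) := Real.sqrt_le_sqrt h4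
      _ = Real.sqrt ‖M‖ * ‖v‖ := Real.sqrt_sq (by positivity)
  calc ‖s‖ ≤ Real.sqrt ‖M‖ * ‖v‖ := hnorm
    _ ≤ Real.sqrt ‖M‖ * (LDd * ‖z₁ - z₂‖) := by
        gcongr
        exact hlip z₁ z₂
    _ = LDd * Real.sqrt ‖M‖ * ‖z₁ - z₂‖ := by ring
end

section
/- Let v: ℝ^{d_z} × ℝ → ℝ^{d_z} be L_v-Lipschitz in its first argument, and let z, ẑ: [t_i, t_{i+1}] → ℝ^{d_z} be differentiable curves with z'(t) = v(z(t), t) and ẑ'(t) = v(ẑ(t), t). Let s̃ and s denote the componentwise cubic Hermite interpolants on [t_i, t_{i+1}] of (z(t_i), z'(t_i), z(t_{i+1}), z'(t_{i+1})) and (ẑ(t_i), ẑ'(t_i), ẑ(t_{i+1}), ẑ'(t_{i+1})) respectively, with δ_i = t_{i+1} − t_i. Then for all t ∈ [t_i, t_{i+1}], ‖s̃(t) − s(t)‖₂ ≤ (|h₀₀(t̃)| + L_v|h₁₀(t̃)|δ_i)‖z(t_i) − ẑ(t_i)‖₂ + (|h₀₁(t̃)| + L_v|h₁₁(t̃)|δ_i)‖z(t_{i+1})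 − ẑ(t_{i+1})‖₂, where t̃ = (t − t_i)/δ_i and h₀₀(x) = 2x³−3x²+1, h₁₀(x) = x³−2x²+x, h₀₁(x) = −2x³+3x², h₁₁(x) = x³−x². -/
/-- Cubic Hermite basis polynomials. -/
def h00 (x : ℝ) : ℝ := 2 * x ^ 3 - 3 * x ^ 2 + 1
def h10 (x : ℝ) : ℝ := x ^ 3 - 2 * x ^ 2 + x
def h01 (x : ℝ) : ℝ := -2 * x ^ 3 + 3 * x ^ 2
def h11 (x : ℝ) : ℝ := x ^ 3 - x ^ 2

/-- stability of cubic Hermite interpolation of ODE trajectories. If `z, ẑ`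
solve `z' = v(z,t)` on `[t_i, t_{i+1}]` with `v` `L_v`-Lipschitz in its first argument, and
`s̃, s` are the cubic Hermite interpolants of `(z(t_i), z'(t_i), z(t_{i+1}), z'(t_{i+1}))`
and `(ẑ(t_i), ẑ'(t_i), ẑ(t_{i+1}), ẑ'(t_{i+1}))` (where `z'(t_j) = v(z(t_j), t_j)`), then
`‖s̃(t) − s(t)‖ ≤ (|h₀₀(t̃)| + L_v|h₁₀(t̃)|δᵢ)‖z(tᵢ) − ẑ(tᵢ)‖ +
(|h₀₁(t̃)| + L_v|h₁₁(t̃)|δᵢ)‖z(tᵢ₊₁) − ẑ(tᵢ₊₁)‖` with `t̃ = (t − tᵢ)/δᵢ`. -/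
theorem hermite_interpolant_stability
    {dz : ℕ} (v : EuclideanSpace ℝ (Fin dz) → ℝ → EuclideanSpace ℝ (Fin dz))
    (Lv : ℝ) (hLv : 0 ≤ Lv)
    (hlip : ∀ t z₁ z₂, ‖v z₁ t - v z₂ t‖ ≤ Lv * ‖z₁ - z₂‖)
    (ti ti1 : ℝ) (hlt : ti < ti1) (δi : ℝ) (hδ : δi = ti1 - ti)
    (z zh : ℝ → EuclideanSpace ℝ (Fin dz))
    (hz : ∀ t ∈ Set.Icc ti ti1, HasDerivAt z (v (z t) t) t)
    (hzh : ∀ t ∈ Set.Icc ti ti1, HasDerivAt zh (v (zh t) t) t)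
    (st s : ℝ → EuclideanSpace ℝ (Fin dz))
    (hst : ∀ t, st t = h00 ((t - ti) / δi) • z ti + h01 ((t - ti) / δi) • z ti1 +
      (δi * h10 ((t - ti) / δi)) • v (z ti) ti + (δi * h11 ((t - ti) / δi)) • v (z ti1) ti1)
    (hs : ∀ t, s t = h00 ((t - ti) / δi) • zh ti + h01 ((t - ti) / δi) • zh ti1 +
      (δi * h10 ((t - ti) / δi)) • v (zh ti) ti + (δi * h11 ((t - ti) / δi)) • v (zh ti1) ti1) :
    ∀ t ∈ Set.Icc ti ti1,
      ‖st t - s t‖ ≤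
        (|h00 ((t - ti) / δi)| + Lv * |h10 ((t - ti) / δi)| * δi) * ‖z ti - zh ti‖ +
        (|h01 ((t - ti) / δi)| + Lv * |h11 ((t - ti) / δi)| * δi) * ‖z ti1 - zh ti1‖ := by

  intro t ht
  have hδpos : 0 < δi := by rw [hδ]; linarith
  set a := h00 ((t - ti) / δi) with ha
  set b := h01 ((t - ti) / δi) with hb
  set c := h10 ((t - ti) / δi) with hc
  set d := h11 ((t - ti) / δi) with hd
  have key : st t - s t = a • (z ti - zh ti) + b • (z ti1 - zh ti1)
      + (δi * c) • (v (z ti) ti - v (zh ti) ti)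
      + (δi * d) • (v (z ti1) ti1 - v (zh ti1) ti1) := by
    rw [hst t, hs t]
    simp only [smul_sub]
    abel
  rw [key]
  have h1 : ‖(δi * c) • (v (z ti) ti - v (zh ti) ti)‖ ≤ Lv * |c| * δi * ‖z ti - zh ti‖ := by
    rw [norm_smul]
    calc ‖δi * c‖ * ‖v (z ti) ti - v (zh ti) ti‖
        ≤ ‖δi * c‖ * (Lv * ‖z ti - zh ti‖) := by
          exact mul_le_mul_of_nonneg_left (hlip ti (z ti) (zh ti)) (norm_nonneg _)
      _ = Lv * |c| * δi * ‖z ti - zh ti‖ := by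
          rw [Real.norm_eq_abs, abs_mul, abs_of_pos hδpos]; ring
  have h2 : ‖(δi * d) • (v (z ti1) ti1 - v (zh ti1) ti1)‖ ≤ Lv * |d| * δi * ‖z ti1 - zh ti1‖ := by
    rw [norm_smul]
    calc ‖δi * d‖ * ‖v (z ti1) ti1 - v (zh ti1) ti1‖
        ≤ ‖δi * d‖ * (Lv * ‖z ti1 - zh ti1‖) := by
          exact mul_le_mul_of_nonneg_left (hlip ti1 (z ti1) (zh ti1)) (norm_nonneg _)
      _ = Lv * |d| * δi * ‖z ti1 - zh ti1‖ := by
          rw [Real.norm_eq_abs, abs_mul, abs_of_pos hδpos]; ring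
  calc ‖a • (z ti - zh ti) + b • (z ti1 - zh ti1)
      + (δi * c) • (v (z ti) ti - v (zh ti) ti)
      + (δi * d) • (v (z ti1) ti1 - v (zh ti1) ti1)‖
      ≤ ‖a • (z ti - zh ti)‖ + ‖b • (z ti1 - zh ti1)‖
        + ‖(δi * c) • (v (z ti) ti - v (zh ti) ti)‖
        + ‖(δi * d) • (v (z ti1) ti1 - v (zh ti1) ti1)‖ := by
          refine le_trans (norm_add_le _ _) ?_
          gcongr
          refine le_trans (norm_add_le _ _) ?_
          gcongr
          exact norm_add_le _ _
    _ ≤ |a| * ‖z ti - zh ti‖ + |b| * ‖z ti1 - zh ti1‖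
        + Lv * |c| * δi * ‖z ti - zh ti‖ + Lv * |d| * δi * ‖z ti1 - zh ti1‖ := by
          rw [norm_smul, norm_smul, Real.norm_eq_abs, Real.norm_eq_abs]
          gcongr
    _ = (|a| + Lv * |c| * δi) * ‖z ti - zh ti‖
        + (|b| + Lv * |d| * δi) * ‖z ti1 - zh ti1‖ := by ring
end

section
/- Let f ∈ C⁴([t_i, t_{i+1}]) and let s be its cubic Hermite interpolant matching f and f' at the endpoints t_i, t_{i+1}, with δ = t_{i+1} − t_i. Then for all t ∈ [t_i, t_{i+1}], |f(t) − s(t)| ≤ (δ⁴ / (2⁴ · 4!)) ‖f⁽⁴⁾‖_{L^∞(t_i, t_{i+1})}. -/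
lemma deriv_quartic (a b c d e t0 : ℝ) :
    deriv (fun x : ℝ => a + b*(x-t0) + c*(x-t0)^2 + d*(x-t0)^3 + e*(x-t0)^4)
    = fun x : ℝ => b + (2*c)*(x-t0) + (3*d)*(x-t0)^2 + (4*e)*(x-t0)^3 + 0*(x-t0)^4 := by
  funext x
  have h1 : HasDerivAt (fun x : ℝ => x - t0) 1 x := (hasDerivAt_id x).sub_const t0
  have H : HasDerivAt (fun x : ℝ => a + b*(x-t0) + c*(x-t0)^2 + d*(x-t0)^3 + e*(x-t0)^4)
      (0 + b*1 + c*((2:ℕ)*(x-t0)^(2-1)*1) + d*((3:ℕ)*(x-t0)^(3-1)*1) + e*((4:ℕ)*(x-t0)^(4-1)*1)) x :=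
    ((((hasDerivAt_const x a).add (h1.const_mul b)).add ((h1.pow 2).const_mul c)).add
      ((h1.pow 3).const_mul d)).add ((h1.pow 4).const_mul e)
  rw [H.deriv]; push_cast; ring

lemma iteratedDeriv4_quartic (a b c d e t0 : ℝ) :
    iteratedDeriv 4 (fun x : ℝ => a + b*(x-t0) + c*(x-t0)^2 + d*(x-t0)^3 + e*(x-t0)^4)
    = fun _ : ℝ => 24*e := by
  rw [show (4:ℕ) = 1+1+1+1 from rfl, iteratedDeriv_succ', deriv_quartic,
    iteratedDeriv_succ', deriv_quartic, iteratedDeriv_succ', deriv_quartic,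
    iteratedDeriv_one, deriv_quartic]
  funext x; ring

lemma contDiff_quartic (a b c d e t0 : ℝ) :
    ContDiff ℝ 4 (fun x : ℝ => a + b*(x-t0) + c*(x-t0)^2 + d*(x-t0)^3 + e*(x-t0)^4) := by
  fun_prop

lemma itW_of_mem_nhds {g : ℝ → ℝ} {s : Set ℝ} {x : ℝ} (n : ℕ) (hx : s ∈ nhds x) :
    iteratedDerivWithin n g s x = iteratedDeriv n g x := by
  rw [iteratedDerivWithin, iteratedDeriv]
  congr 1
  have h : s =ᶠ[nhds x] (Set.univ : Set ℝ) := Filter.eventuallyEq_univ.2 hx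
  rw [iteratedFDerivWithin_congr_set h, iteratedFDerivWithin_univ]

lemma w_bound {a b t : ℝ} (h1 : a ≤ t) (h2 : t ≤ b) :
    (t - a)^2 * (t - b)^2 ≤ (b - a)^4 / 16 := by
  nlinarith [sq_nonneg (2*t - a - b), sq_nonneg ((t-a)*(b-t)),
    mul_nonneg (sub_nonneg.2 h1) (sub_nonneg.2 h2), sq_nonneg (t-a), sq_nonneg (b-t)]


set_option maxHeartbeats 1000000 in
/-- cubic Hermite interpolation error bound. For `f ∈ C⁴([tᵢ, tᵢ₊₁])` with
cubic Hermite interpolant `s` matching `f` and `f'` at the endpoints, `δ = tᵢ₊₁ − tᵢ`, and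
`M ≥ ‖f⁽⁴⁾‖_{L^∞(tᵢ,tᵢ₊₁)}`:
`|f(t) − s(t)| ≤ (δ⁴ / (2⁴ · 4!)) M` for all `t ∈ [tᵢ, tᵢ₊₁]`. -/
theorem hermite_interpolation_error
    (ti ti1 : ℝ) (hlt : ti < ti1) (δ : ℝ) (hδ : δ = ti1 - ti)
    (f : ℝ → ℝ) (hf : ContDiffOn ℝ 4 f (Set.Icc ti ti1))
    (M : ℝ)
    (hM : ∀ t ∈ Set.Icc ti ti1, |iteratedDerivWithin 4 f (Set.Icc ti ti1) t| ≤ M)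
    (s : ℝ → ℝ)
    (hs : ∀ t, s t = h00 ((t - ti) / δ) * f ti + h01 ((t - ti) / δ) * f ti1 +
      δ * h10 ((t - ti) / δ) * derivWithin f (Set.Icc ti ti1) ti +
      δ * h11 ((t - ti) / δ) * derivWithin f (Set.Icc ti ti1) ti1) :
    ∀ t ∈ Set.Icc ti ti1, |f t - s t| ≤ δ ^ 4 / (2 ^ 4 * Nat.factorial 4) * M := by
  have hδpos : 0 < δ := by rw [hδ]; linarith
  have hδ0 : δ ≠ 0 := ne_of_gt hδpos
  intro t ht
  have hu : UniqueDiffOn ℝ (Set.Icc ti ti1) := uniqueDiffOn_Icc hlt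
  have htiI : ti ∈ Set.Icc ti ti1 := Set.left_mem_Icc.2 hlt.le
  have hti1I : ti1 ∈ Set.Icc ti ti1 := Set.right_mem_Icc.2 hlt.le
  have hM0 : 0 ≤ M := le_trans (abs_nonneg _) (hM ti htiI)
  have hfac : ((Nat.factorial 4 : ℕ) : ℝ) = 24 := by norm_num [Nat.factorial]
  have hbound0 : (0:ℝ) ≤ δ ^ 4 / (2 ^ 4 * Nat.factorial 4) * M := by
    apply mul_nonneg _ hM0
    positivity
  -- s matches f at the endpoints
  have hsti : s ti = f ti := by
    rw [hs ti]; simp [h00, h01, h10, h11]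
  have hsti1 : s ti1 = f ti1 := by
    rw [hs ti1]; simp only [h00, h01, h10, h11, ← hδ]
    field_simp
    ring
  rcases eq_or_lt_of_le ht.1 with h | hl
  · rw [← h, hsti]; simpa using hbound0
  rcases eq_or_lt_of_le ht.2 with h | hr
  · rw [h, hsti1]; simpa using hbound0
  -- main case : ti < t < ti1
  have hwt : (t - ti)^2 * (t - ti1)^2 ≠ 0 :=
    mul_ne_zero (pow_ne_zero _ (sub_ne_zero.2 (ne_of_gt hl)))
      (pow_ne_zero _ (sub_ne_zero.2 (ne_of_lt hr)))
  set K := (f t - s t) / ((t - ti)^2 * (t - ti1)^2) with hK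
  have hKw : K * ((t - ti)^2 * (t - ti1)^2) = f t - s t := div_mul_cancel₀ _ hwt
  set A := f ti with hA
  set B := derivWithin f (Set.Icc ti ti1) ti with hB
  set B1 := derivWithin f (Set.Icc ti ti1) ti1 with hB1
  set C := (-3*f ti + 3*f ti1)/δ^2 - (2*B + B1)/δ + K*δ^2 with hC
  set D := (2*f ti - 2*f ti1)/δ^3 + (B + B1)/δ^2 - 2*K*δ with hD
  set q : ℝ → ℝ := fun x => A + B*(x-ti) + C*(x-ti)^2 + D*(x-ti)^3 + K*(x-ti)^4 with hq
  have hqx : ∀ x, q x = A + B*(x-ti) + C*(x-ti)^2 + D*(x-ti)^3 + K*(x-ti)^4 := fun x => rfl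
  have hqs : ∀ x, q x = s x + K * ((x - ti)^2 * (x - ti1)^2) := by
    intro x
    rw [hqx, hs x, hA, hC, hD, h00, h01, h10, h11]
    have h1 : ti1 = ti + δ := by rw [hδ]; ring
    rw [h1]
    field_simp
    ring
  have hqcd : ContDiff ℝ 4 q := contDiff_quartic A B C D K ti
  set F : ℝ → ℝ := fun x => f x - q x with hF
  have hFx : ∀ x, F x = f x - q x := fun x => rfl
  have hFcd : ContDiffOn ℝ 4 F (Set.Icc ti ti1) := hf.sub hqcd.contDiffOn
  have hGcont : ∀ k : ℕ, k ≤ 4 → ContinuousOn (iteratedDerivWithin k F (Set.Icc ti ti1)) (Set.Icc ti ti1) := fun k hk =>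
    hFcd.continuousOn_iteratedDerivWithin (by exact_mod_cast hk) hu
  have rolle_step : ∀ k : ℕ, k < 4 → ∀ a b : ℝ, a ∈ Set.Icc ti ti1 → b ∈ Set.Icc ti ti1 → a < b →
      iteratedDerivWithin k F (Set.Icc ti ti1) a = 0 →
      iteratedDerivWithin k F (Set.Icc ti ti1) b = 0 →
      ∃ c ∈ Set.Ioo a b, iteratedDerivWithin (k+1) F (Set.Icc ti ti1) c = 0 := by
    intro k hk a b ha hb hab hGa hGb
    obtain ⟨c, hc, hc0⟩ := exists_deriv_eq_zero hab
      ((hGcont k hk.le).mono (Set.Icc_subset_Icc ha.1 hb.2)) (hGa.trans hGb.symm)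
    have hcIoo : c ∈ Set.Ioo ti ti1 := ⟨lt_of_le_of_lt ha.1 hc.1, lt_of_lt_of_le hc.2 hb.2⟩
    have hcI : c ∈ Set.Icc ti ti1 := Set.Ioo_subset_Icc_self hcIoo
    refine ⟨c, hc, ?_⟩
    rw [iteratedDerivWithin_succ,
      derivWithin_of_mem_nhds (Icc_mem_nhds hcIoo.1 hcIoo.2)]
    exact hc0
  -- zeros of level 0
  have hF_ti : iteratedDerivWithin 0 F (Set.Icc ti ti1) ti = 0 := by
    rw [iteratedDerivWithin_zero, hFx, hqs ti, hsti]; ring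
  have hF_ti1 : iteratedDerivWithin 0 F (Set.Icc ti ti1) ti1 = 0 := by
    rw [iteratedDerivWithin_zero, hFx, hqs ti1, hsti1]; ring
  have hF_t : iteratedDerivWithin 0 F (Set.Icc ti ti1) t = 0 := by
    rw [iteratedDerivWithin_zero, hFx, hqs t, hKw]; ring
  -- zeros of level 1 at the endpoints
  have hderivq : deriv q = fun x : ℝ =>
      B + (2*C)*(x-ti) + (3*D)*(x-ti)^2 + (4*K)*(x-ti)^3 + 0*(x-ti)^4 := by
    rw [hq]; exact deriv_quartic A B C D K ti
  have hG1eq : ∀ x ∈ Set.Icc ti ti1,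
      iteratedDerivWithin 1 F (Set.Icc ti ti1) x = derivWithin f (Set.Icc ti ti1) x - deriv q x := by
    intro x hx
    rw [iteratedDerivWithin_one]
    have hder : derivWithin F (Set.Icc ti ti1) x
        = derivWithin f (Set.Icc ti ti1) x - derivWithin q (Set.Icc ti ti1) x := by
      rw [hF]
      exact derivWithin_sub
        ((hf.differentiableOn (by norm_num)) x hx)
        (hqcd.differentiable (by norm_num) x).differentiableWithinAt
    rw [hder, (hqcd.differentiable (by norm_num) x).derivWithin (hu.uniqueDiffWithinAt hx)]
  have hG1ti : iteratedDerivWithin 1 F (Set.Icc ti ti1) ti = 0 := by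
    rw [hG1eq ti htiI, hderivq]
    simp [← hB]
  have hG1ti1 : iteratedDerivWithin 1 F (Set.Icc ti ti1) ti1 = 0 := by
    rw [hG1eq ti1 hti1I, hderivq]
    simp only [← hB1]
    have h1 : ti1 - ti = δ := by rw [hδ]
    rw [h1, hC, hD]
    field_simp
    ring
  -- Rolle cascade
  have hmem : ∀ {x : ℝ}, x ∈ Set.Ioo ti ti1 → x ∈ Set.Icc ti ti1 :=
    fun hx => Set.Ioo_subset_Icc_self hx
  obtain ⟨x1, hx1, hGx1⟩ := rolle_step 0 (by norm_num) ti t htiI ht hl hF_ti hF_t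
  obtain ⟨x2, hx2, hGx2⟩ := rolle_step 0 (by norm_num) t ti1 ht hti1I hr hF_t hF_ti1
  have hx1I : x1 ∈ Set.Ioo ti ti1 := ⟨hx1.1, lt_trans hx1.2 hr⟩
  have hx2I : x2 ∈ Set.Ioo ti ti1 := ⟨lt_trans hl hx2.1, hx2.2⟩
  have hx12 : x1 < x2 := lt_trans hx1.2 hx2.1
  obtain ⟨y1, hy1, hGy1⟩ := rolle_step 1 (by norm_num) ti x1 htiI (hmem hx1I) hx1I.1 hG1ti hGx1
  obtain ⟨y2, hy2, hGy2⟩ := rolle_step 1 (by norm_num) x1 x2 (hmem hx1I) (hmem hx2I) hx12 hGx1 hGx2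
  obtain ⟨y3, hy3, hGy3⟩ := rolle_step 1 (by norm_num) x2 ti1 (hmem hx2I) hti1I hx2I.2 hGx2 hG1ti1
  have hy1I : y1 ∈ Set.Ioo ti ti1 := ⟨hy1.1, lt_trans hy1.2 hx1I.2⟩
  have hy2I : y2 ∈ Set.Ioo ti ti1 := ⟨lt_trans hx1I.1 hy2.1, lt_trans hy2.2 hx2I.2⟩
  have hy3I : y3 ∈ Set.Ioo ti ti1 := ⟨lt_trans hx2I.1 hy3.1, hy3.2⟩
  have hy12 : y1 < y2 := lt_trans hy1.2 hy2.1
  have hy23 : y2 < y3 := lt_trans hy2.2 hy3.1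
  obtain ⟨z1, hz1, hGz1⟩ := rolle_step 2 (by norm_num) y1 y2 (hmem hy1I) (hmem hy2I) hy12 hGy1 hGy2
  obtain ⟨z2, hz2, hGz2⟩ := rolle_step 2 (by norm_num) y2 y3 (hmem hy2I) (hmem hy3I) hy23 hGy2 hGy3
  have hz1I : z1 ∈ Set.Ioo ti ti1 := ⟨lt_trans hy1I.1 hz1.1, lt_trans hz1.2 hy2I.2⟩
  have hz2I : z2 ∈ Set.Ioo ti ti1 := ⟨lt_trans hy2I.1 hz2.1, lt_trans hz2.2 hy3I.2⟩
  have hz12 : z1 < z2 := lt_trans hz1.2 hz2.1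
  obtain ⟨ξ, hξ, hGξ⟩ := rolle_step 3 (by norm_num) z1 z2 (hmem hz1I) (hmem hz2I) hz12 hGz1 hGz2
  have hξI : ξ ∈ Set.Ioo ti ti1 := ⟨lt_trans hz1I.1 hξ.1, lt_trans hξ.2 hz2I.2⟩
  have hξIcc : ξ ∈ Set.Icc ti ti1 := hmem hξI
  -- identify the fourth derivative of F at ξ
  have hsub : iteratedDerivWithin 4 F (Set.Icc ti ti1) ξ
      = iteratedDerivWithin 4 f (Set.Icc ti ti1) ξ - iteratedDerivWithin 4 q (Set.Icc ti ti1) ξ := by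
    have hFeq : F = f - q := rfl
    rw [hFeq]
    exact iteratedDerivWithin_sub hξIcc hu (hf ξ hξIcc) (hqcd.contDiffOn ξ hξIcc)
  have hq4 : iteratedDerivWithin 4 q (Set.Icc ti ti1) ξ = 24 * K := by
    rw [itW_of_mem_nhds 4 (Icc_mem_nhds hξI.1 hξI.2), hq, iteratedDeriv4_quartic]
  have hKval : 24 * K = iteratedDerivWithin 4 f (Set.Icc ti ti1) ξ := by
    have h0 := hGξ
    rw [show (3:ℕ)+1 = 4 from rfl, hsub, hq4] at h0
    have := sub_eq_zero.mp h0
    linarith [this]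
  -- conclude
  have hKbd : |K| ≤ M / 24 := by
    have h24 : |iteratedDerivWithin 4 f (Set.Icc ti ti1) ξ| ≤ M := hM ξ hξIcc
    rw [← hKval, abs_mul, abs_of_nonneg (by norm_num : (0:ℝ) ≤ 24)] at h24
    linarith
  have hwbd : (t - ti)^2 * (t - ti1)^2 ≤ δ^4 / 16 := by
    rw [hδ]
    exact w_bound ht.1 ht.2
  have hfinal : |f t - s t| ≤ M / 24 * (δ^4 / 16) := by
    rw [← hKw, abs_mul]
    have hw0 : (0:ℝ) ≤ (t - ti)^2 * (t - ti1)^2 := by positivity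
    rw [abs_of_nonneg hw0]
    exact mul_le_mul hKbd hwbd hw0 (by positivity)
  calc |f t - s t| ≤ M / 24 * (δ^4 / 16) := hfinal
    _ = δ ^ 4 / (2 ^ 4 * Nat.factorial 4) * M := by rw [hfac]; ring
end
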